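/- For every integer m ∈ ℤ one has V + c_m ⊆ V: if v ∈ V then v + c_m ∈ V. -/

import Mathlib

/-- `e(w) = exp(2πiw)`. -/
noncomputable def e (w : ℂ) : ℂ := Complex.exp (2 * Real.pi * Complex.I * w)

/-- The Fredholm series `f(z) = ∑_{n=0}^∞ z^{2^n}`. -/
noncomputable def f (z : ℂ) : ℂ := ∑' n : ℕ, z ^ (2 ^ n)

/-- `F(w) = f(e(w)) = ∑_{n=0}^∞ e(2^n w)` on the upper half-plane. -/
noncomputable def F (w : ℂ) : ℂ := ∑' n : ℕ, e ((2 ^ n : ℕ) * w)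

/-- `G(w) = ∑_{l=1}^∞ e(−1/2^l)(e(w/2^l) − 1)` (indexing: `l = l' + 1`, `l' : ℕ`). -/
noncomputable def G (w : ℂ) : ℂ :=
  ∑' l : ℕ, e (-(1 / 2 ^ (l + 1))) * (e (w / 2 ^ (l + 1)) - 1)

/-- `S = F + G` on the upper half-plane. -/
noncomputable def S (w : ℂ) : ℂ := F w + G w

/-- The upper half-plane `ℍ = {w : ℂ | Im w > 0}`. -/
def UHP : Set ℂ := {w : ℂ | 0 < w.im}

/-- `V = S(ℍ)`, the image of `S` on the upper half-plane. -/
noncomputable def V : Set ℂ := S '' UHP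

/-- `c_m = ∑_{l=1}^∞ (e(m/2^l) − 1)` (indexing: `l = l' + 1`, `l' : ℕ`). -/
noncomputable def c (m : ℤ) : ℂ := ∑' l : ℕ, (e ((m : ℂ) / 2 ^ (l + 1)) - 1)

/-!
An integer shift leaves `F` unchanged and changes `G` by `c N` plus the error
`shiftError z N = ∑ₗ (e((z-1)/2^l) - 1)(e(N/2^l) - 1)`. For `N = 2^k m` one has `c N = c m`, and the
first `k` terms of the error vanish, so `S (z + 2^k m) - c m → S z` uniformly on bounded sets.
If `S` is constant this forces `c m = 0`. Otherwise `S - S w` has no zero on a small circle around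
`w`, and by the minimum modulus principle (a Hurwitz-type argument) `S (· + 2^k m) - c m` takes the
value `S w` inside that circle once `k` is large.
-/

open Complex Metric Filter Topology

theorem exists_mem_ball_eq_zero_of_norm_lt {φ : ℂ → ℂ} {w : ℂ} {r : ℝ} (hr : 0 < r)
    (hφ : DifferentiableOn ℂ φ (closedBall w r)) (hlt : ∀ z ∈ sphere w r, ‖φ w‖ < ‖φ z‖) :
    ∃ z ∈ ball w r, φ z = 0 := by
  by_contra! hne
  have hne' : ∀ z ∈ closedBall w r, φ z ≠ 0 := fun z hz => by
    rcases (mem_closedBall.1 hz).lt_or_eq with hz | hz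
    · exact hne z hz
    · exact norm_pos_iff.1 ((norm_nonneg _).trans_lt (hlt z hz))
  have hinv : DiffContOnCl ℂ (fun z => (φ z)⁻¹) (ball w r) := by
    refine DifferentiableOn.diffContOnCl ?_
    rw [closure_ball w hr.ne']
    exact hφ.inv hne'
  obtain ⟨z, hz, hmax⟩ :=
    Complex.exists_mem_frontier_isMaxOn_norm isBounded_ball ⟨w, mem_ball_self hr⟩ hinv
  rw [frontier_ball w hr.ne'] at hz
  rw [closure_ball w hr.ne'] at hmax
  have hwz : ‖(φ w)⁻¹‖ ≤ ‖(φ z)⁻¹‖ := hmax (mem_closedBall_self hr.le)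
  rw [norm_inv, norm_inv, inv_le_inv₀ (norm_pos_iff.2 (hne' w (mem_closedBall_self hr.le)))
    (norm_pos_iff.2 (hne' z (sphere_subset_closedBall hz)))] at hwz
  exact (hlt z hz).not_ge hwz

theorem exists_pos_forall_exists_eq_of_ne_on_sphere {g : ℂ → ℂ} {w : ℂ} {r : ℝ} (hr : 0 < r)
    (hg : ContinuousOn g (sphere w r)) (hne : ∀ z ∈ sphere w r, g z ≠ g w) :
    ∃ ε > 0, ∀ h : ℂ → ℂ, DifferentiableOn ℂ h (closedBall w r) →
      (∀ z ∈ closedBall w r, ‖h z - g z‖ < ε) → ∃ z ∈ ball w r, h z = g w := by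
  obtain ⟨z₀, hz₀, hmin⟩ := (isCompact_sphere w r).exists_isMinOn
    (NormedSpace.sphere_nonempty.2 hr.le) (hg.sub continuousOn_const).norm
  have hgap : 0 < ‖g z₀ - g w‖ := norm_pos_iff.2 (sub_ne_zero.2 (hne z₀ hz₀))
  refine ⟨‖g z₀ - g w‖ / 2, half_pos hgap, fun h hh hclose => ?_⟩
  suffices ∃ z ∈ ball w r, h z - g w = 0 by simpa only [sub_eq_zero] using this
  refine exists_mem_ball_eq_zero_of_norm_lt hr (hh.sub_const _) fun z hz => ?_
  have hw := hclose w (mem_closedBall_self hr.le)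
  have hz' := hclose z (sphere_subset_closedBall hz)
  have hmin' : ‖g z₀ - g w‖ ≤ ‖g z - g w‖ := hmin hz
  have htri := norm_sub_le (h z - g w) (h z - g z)
  rw [sub_sub_sub_cancel_left] at htri
  linarith

theorem exists_closedBall_forall_exists_eq_of_eventually_ne {g : ℂ → ℂ} {U : Set ℂ} {w : ℂ}
    (hU : U ∈ 𝓝 w) (hg : ContinuousOn g U) (hne : ∀ᶠ z in 𝓝[≠] w, g z ≠ g w) :
    ∃ r > 0, closedBall w r ⊆ U ∧ ∃ ε > 0, ∀ h : ℂ → ℂ, DifferentiableOn ℂ h (closedBall w r) →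
      (∀ z ∈ closedBall w r, ‖h z - g z‖ < ε) → ∃ z ∈ ball w r, h z = g w := by
  obtain ⟨δ, hδ, hball⟩ :=
    Metric.eventually_nhds_iff_ball.1
      ((show ∀ᶠ z in 𝓝 w, z ∈ U from hU).and (eventually_nhdsWithin_iff.1 hne))
  have hsub : closedBall w (δ / 2) ⊆ ball w δ := closedBall_subset_ball (half_lt_self hδ)
  refine ⟨δ / 2, half_pos hδ, fun z hz => (hball z (hsub hz)).1, ?_⟩
  refine exists_pos_forall_exists_eq_of_ne_on_sphere (half_pos hδ)
    (hg.mono fun z hz => (hball z (hsub (sphere_subset_closedBall hz))).1) fun z hz => ?_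
  exact (hball z (hsub (sphere_subset_closedBall hz))).2 (ne_of_mem_sphere hz (half_pos hδ).ne')

lemma e_add (x y : ℂ) : e (x + y) = e x * e y := by
  simp only [e, mul_add, Complex.exp_add]

lemma e_intCast (n : ℤ) : e n = 1 := by
  rw [e, ← Complex.exp_int_mul_two_pi_mul_I n]
  ring_nf

lemma e_add_intCast (w : ℂ) (n : ℤ) : e (w + n) = e w := by
  rw [e_add, e_intCast, mul_one]

lemma norm_e (w : ℂ) : ‖e w‖ = Real.exp (-(2 * Real.pi * w.im)) := by
  simp [e, Complex.norm_exp]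

lemma norm_e_ofReal (x : ℝ) : ‖e x‖ = 1 := by
  simp [norm_e]

lemma norm_e_ofReal_sub_one_le_two (x : ℝ) : ‖e x - 1‖ ≤ 2 := by
  linarith [norm_sub_le (e x) 1, norm_e_ofReal x, norm_one (α := ℂ)]

lemma norm_e_sub_one_le (w : ℂ) :
    ‖e w - 1‖ ≤ 2 * Real.pi * ‖w‖ * Real.exp (2 * Real.pi * ‖w‖) := by
  simpa [e, abs_of_pos Real.pi_pos] using
    Complex.norm_exp_sub_sum_le_norm_mul_exp (2 * Real.pi * I * w) 1

lemma norm_e_div_two_pow_sub_one_le {w : ℂ} {R : ℝ} (hw : ‖w‖ ≤ R) (l : ℕ) :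
    ‖e (w / 2 ^ (l + 1)) - 1‖ ≤ 2 * Real.pi * R * Real.exp (2 * Real.pi * R) * (1 / 2) ^ l := by
  have hR : 0 ≤ R := (norm_nonneg w).trans hw
  have hnorm : ‖w / 2 ^ (l + 1)‖ ≤ R * (1 / 2) ^ l := by
    rw [norm_div, norm_pow, RCLike.norm_ofNat, div_le_iff₀ (by positivity), pow_succ,
      ← mul_assoc, mul_assoc R, ← mul_pow, one_div_mul_cancel two_ne_zero, one_pow]
    linarith
  have hle : R * (1 / 2) ^ l ≤ R :=
    mul_le_of_le_one_right hR (pow_le_one₀ (by norm_num) (by norm_num))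
  calc ‖e (w / 2 ^ (l + 1)) - 1‖
      ≤ 2 * Real.pi * ‖w / 2 ^ (l + 1)‖ * Real.exp (2 * Real.pi * ‖w / 2 ^ (l + 1)‖) :=
        norm_e_sub_one_le _
    _ ≤ 2 * Real.pi * (R * (1 / 2) ^ l) * Real.exp (2 * Real.pi * R) := by
        gcongr
        exact hnorm.trans hle
    _ = _ := by ring

noncomputable def shiftError (z : ℂ) (N : ℤ) : ℂ :=
  ∑' l : ℕ, (e ((z - 1) / 2 ^ (l + 1)) - 1) * (e (N / 2 ^ (l + 1)) - 1)

lemma summable_e_div_two_pow_sub_one (w : ℂ) : Summable fun l : ℕ => e (w / 2 ^ (l + 1)) - 1 :=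
  .of_norm_bounded (summable_geometric_two.mul_left _) (norm_e_div_two_pow_sub_one_le le_rfl)

lemma norm_G_summand_le {w : ℂ} {R : ℝ} (hw : ‖w‖ ≤ R) (l : ℕ) :
    ‖e (-(1 / 2 ^ (l + 1))) * (e (w / 2 ^ (l + 1)) - 1)‖ ≤
      2 * Real.pi * R * Real.exp (2 * Real.pi * R) * (1 / 2) ^ l := by
  have hcoeff : ‖e (-(1 / 2 ^ (l + 1)))‖ = 1 := by
    rw [show (-(1 / 2 ^ (l + 1)) : ℂ) = ((-(1 / 2 ^ (l + 1)) : ℝ) : ℂ) by push_cast; rfl,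
      norm_e_ofReal]
  rw [norm_mul, hcoeff, one_mul]
  exact norm_e_div_two_pow_sub_one_le hw l

lemma summable_G_series (w : ℂ) :
    Summable fun l : ℕ => e (-(1 / 2 ^ (l + 1))) * (e (w / 2 ^ (l + 1)) - 1) :=
  .of_norm_bounded (summable_geometric_two.mul_left _) (norm_G_summand_le le_rfl)

lemma norm_shiftError_summand_le {z : ℂ} {R : ℝ} (hz : ‖z - 1‖ ≤ R) (N : ℤ) (l : ℕ) :
    ‖(e ((z - 1) / 2 ^ (l + 1)) - 1) * (e (N / 2 ^ (l + 1)) - 1)‖ ≤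
      2 * (2 * Real.pi * R * Real.exp (2 * Real.pi * R)) * (1 / 2) ^ l := by
  have hN : ‖e (N / 2 ^ (l + 1)) - 1‖ ≤ 2 := by
    exact_mod_cast norm_e_ofReal_sub_one_le_two (N / 2 ^ (l + 1))
  rw [norm_mul]
  nlinarith [norm_e_div_two_pow_sub_one_le hz l, norm_nonneg (e ((z - 1) / 2 ^ (l + 1)) - 1)]

lemma summable_shiftError_series (z : ℂ) (N : ℤ) :
    Summable fun l : ℕ => (e ((z - 1) / 2 ^ (l + 1)) - 1) * (e (N / 2 ^ (l + 1)) - 1) :=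
  .of_norm_bounded (summable_geometric_two.mul_left _) (norm_shiftError_summand_le le_rfl N)

lemma G_add_intCast (z : ℂ) (N : ℤ) : G (z + N) = G z + c N + shiftError z N := by
  have hsummand (l : ℕ) : e (-(1 / 2 ^ (l + 1))) * (e ((z + N) / 2 ^ (l + 1)) - 1) =
      e (-(1 / 2 ^ (l + 1))) * (e (z / 2 ^ (l + 1)) - 1) + (e (N / 2 ^ (l + 1)) - 1) +
        (e ((z - 1) / 2 ^ (l + 1)) - 1) * (e (N / 2 ^ (l + 1)) - 1) := by
    rw [add_div, e_add, show (z - 1) / 2 ^ (l + 1) = -(1 / 2 ^ (l + 1)) + z / 2 ^ (l + 1) by ring,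
      e_add]
    ring
  have hG := summable_G_series z
  have hc := summable_e_div_two_pow_sub_one N
  rw [G, tsum_congr hsummand, (hG.add hc).tsum_add (summable_shiftError_series z N),
    hG.tsum_add hc]
  rfl

lemma F_add_intCast (z : ℂ) (N : ℤ) : F (z + N) = F z := by
  refine tsum_congr fun n => ?_
  have hshift : ((2 ^ n : ℕ) : ℂ) * (z + N) = (2 ^ n : ℕ) * z + ((2 ^ n * N : ℤ) : ℂ) := by
    push_cast
    ring
  rw [hshift, e_add_intCast]

lemma S_add_intCast (z : ℂ) (N : ℤ) : S (z + N) = S z + c N + shiftError z N := by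
  rw [S, S, F_add_intCast, G_add_intCast]
  ring

lemma c_two_mul (N : ℤ) : c (2 * N) = c N := by
  have hshift (l : ℕ) : e (((2 * N : ℤ) : ℂ) / 2 ^ (l + 1)) - 1 = e (N / 2 ^ l) - 1 := by
    rw [pow_succ, Int.cast_mul, Int.cast_two, mul_comm _ (2 : ℂ), mul_div_mul_left _ _ two_ne_zero]
  calc c (2 * N) = ∑' l : ℕ, (e (N / 2 ^ l) - 1) := tsum_congr hshift
    _ = (e (N / 2 ^ 0) - 1) + c N :=
        ((summable_nat_add_iff (f := fun l : ℕ => e (N / 2 ^ l) - 1) 1).1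
          (summable_e_div_two_pow_sub_one N)).tsum_eq_zero_add
    _ = c N := by rw [pow_zero, div_one, e_intCast, sub_self, zero_add]

lemma c_two_pow_mul (k : ℕ) (m : ℤ) : c (2 ^ k * m) = c m := by
  induction k with
  | zero => simp
  | succ k ih => rw [pow_succ', mul_assoc, c_two_mul, ih]

lemma e_two_pow_mul_div_two_pow {l k : ℕ} (hlk : l < k) (m : ℤ) :
    e (((2 ^ k * m : ℤ) : ℂ) / 2 ^ (l + 1)) = 1 := by
  have hint : ((2 ^ k * m : ℤ) : ℂ) / 2 ^ (l + 1) = ((2 ^ (k - (l + 1)) * m : ℤ) : ℂ) := by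
    rw [div_eq_iff (pow_ne_zero _ two_ne_zero)]
    push_cast
    rw [mul_right_comm, ← pow_add, Nat.sub_add_cancel hlk]
  rw [hint, e_intCast]

lemma norm_shiftError_two_pow_mul_le {z : ℂ} {R : ℝ} (hz : ‖z - 1‖ ≤ R) (m : ℤ) (k : ℕ) :
    ‖shiftError z (2 ^ k * m)‖ ≤
      ∑' l : ℕ, 2 * (2 * Real.pi * R * Real.exp (2 * Real.pi * R)) * (1 / 2) ^ (l + k) := by
  set a : ℕ → ℂ := fun l =>
    (e ((z - 1) / 2 ^ (l + 1)) - 1) * (e (((2 ^ k * m : ℤ) : ℂ) / 2 ^ (l + 1)) - 1)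
  have hhead : ∑ l ∈ Finset.range k, a l = 0 := Finset.sum_eq_zero fun l hl => by
    simp only [a, e_two_pow_mul_div_two_pow (Finset.mem_range.1 hl), sub_self, mul_zero]
  have htail : shiftError z (2 ^ k * m) = ∑' l : ℕ, a (l + k) := by
    rw [shiftError, ← (summable_shiftError_series z _).sum_add_tsum_nat_add k, hhead, zero_add]
  rw [htail]
  exact tsum_of_norm_bounded ((summable_nat_add_iff k).2 (summable_geometric_two.mul_left _)).hasSum
    fun l => norm_shiftError_summand_le hz _ (l + k)

lemma tendstoUniformlyOn_shiftError_two_pow_mul (m : ℤ) {s : Set ℂ} (hs : Bornology.IsBounded s) :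
    TendstoUniformlyOn (fun k z => shiftError z (2 ^ k * m)) 0 atTop s := by
  obtain ⟨R, hR⟩ := hs.subset_closedBall 1
  have htail := tendsto_sum_nat_add fun l : ℕ =>
    2 * (2 * Real.pi * R * Real.exp (2 * Real.pi * R)) * (1 / 2 : ℝ) ^ l
  rw [Metric.tendstoUniformlyOn_iff]
  intro ε hε
  filter_upwards [htail.eventually (gt_mem_nhds hε)] with k hk z hz
  rw [Pi.zero_apply, dist_zero_left]
  exact (norm_shiftError_two_pow_mul_le (mem_closedBall_iff_norm.1 (hR hz)) m k).trans_lt hk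

lemma differentiable_e : Differentiable ℂ e := by
  unfold e
  fun_prop

lemma differentiable_G : Differentiable ℂ G := by
  intro w₀
  have hG : DifferentiableOn ℂ G (ball 0 (‖w₀‖ + 1)) :=
    differentiableOn_tsum_of_summable_norm (summable_geometric_two.mul_left _)
      (fun l => ((differentiable_const _).mul
        ((differentiable_e.comp (differentiable_id.div_const _)).sub_const _)).differentiableOn)
      isOpen_ball fun l w hw => norm_G_summand_le (mem_ball_zero_iff.1 hw).le l
  exact hG.differentiableAt (isOpen_ball.mem_nhds (mem_ball_zero_iff.2 (lt_add_one _)))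

lemma norm_e_two_pow_mul_le {w : ℂ} {δ : ℝ} (hδ : 0 ≤ δ) (hw : δ ≤ w.im) (n : ℕ) :
    ‖e ((2 ^ n : ℕ) * w)‖ ≤ Real.exp (-(2 * Real.pi * δ)) ^ n := by
  have hn : (n : ℝ) ≤ 2 ^ n := by exact_mod_cast n.lt_two_pow_self.le
  rw [norm_e, ← Real.exp_nat_mul, Real.exp_le_exp]
  simp only [Complex.mul_im, Complex.natCast_re, Complex.natCast_im, zero_mul, add_zero]
  push_cast
  nlinarith [Real.pi_pos, mul_le_mul hn hw hδ (by positivity)]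

lemma isOpen_UHP : IsOpen UHP :=
  isOpen_lt continuous_const Complex.continuous_im

lemma add_intCast_mem_UHP {z : ℂ} (hz : z ∈ UHP) (N : ℤ) : z + N ∈ UHP := by
  simpa [UHP] using hz

lemma differentiableOn_F : DifferentiableOn ℂ F UHP := by
  intro z hz
  have hδ : 0 < z.im / 2 := half_pos hz
  have hratio : Real.exp (-(2 * Real.pi * (z.im / 2))) < 1 :=
    Real.exp_lt_one_iff.2 (neg_neg_of_pos (by positivity))
  have hF : DifferentiableOn ℂ F {w : ℂ | z.im / 2 < w.im} :=
    differentiableOn_tsum_of_summable_norm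
      (summable_geometric_of_lt_one (Real.exp_nonneg _) hratio)
      (fun n => (differentiable_e.comp (differentiable_id.const_mul _)).differentiableOn)
      (isOpen_lt continuous_const Complex.continuous_im)
      fun n w hw => norm_e_two_pow_mul_le hδ.le (le_of_lt hw) n
  exact (hF.differentiableAt ((isOpen_lt continuous_const Complex.continuous_im).mem_nhds
    (show z.im / 2 < z.im from half_lt_self hz))).differentiableWithinAt

lemma differentiableOn_S : DifferentiableOn ℂ S UHP :=
  differentiableOn_F.add differentiable_G.differentiableOn

lemma c_eq_zero_of_eqOn_const {a : ℂ} (h : Set.EqOn S (fun _ => a) UHP) (m : ℤ) : c m = 0 := by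
  have hI : I ∈ UHP := by simp [UHP]
  have herr (k : ℕ) : shiftError I (2 ^ k * m) = -c m := by
    have := S_add_intCast I (2 ^ k * m)
    rw [h hI, h (add_intCast_mem_UHP hI _), c_two_pow_mul] at this
    linear_combination -this
  have hlim := (tendstoUniformlyOn_shiftError_two_pow_mul m
    (Bornology.isBounded_singleton (x := I))).tendsto_at (Set.mem_singleton I)
  simp only [herr, Pi.zero_apply] at hlim
  exact neg_eq_zero.1 (tendsto_nhds_unique tendsto_const_nhds hlim)

/-- For every integer `m`, one has `V + c_m ⊆ V`. -/
theorem V_add_cm_subset_V (m : ℤ) (v : ℂ) (hv : v ∈ V) : v + c m ∈ V := by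
  obtain ⟨w, hw, rfl⟩ := hv
  have hS := differentiableOn_S.analyticOnNhd isOpen_UHP
  rcases (hS w hw).eventually_eq_or_eventually_ne (analyticAt_const (v := S w)) with hconst | hne
  · have hSconst := hS.eqOn_of_preconnected_of_eventuallyEq analyticOnNhd_const
      (convex_halfSpace_im_gt 0).isPreconnected hw hconst
    rw [c_eq_zero_of_eqOn_const hSconst, add_zero]
    exact Set.mem_image_of_mem S hw
  obtain ⟨r, -, hball, ε, hε, hhurwitz⟩ := exists_closedBall_forall_exists_eq_of_eventually_ne
    (isOpen_UHP.mem_nhds hw) differentiableOn_S.continuousOn hne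
  obtain ⟨k, hk⟩ := (Metric.tendstoUniformlyOn_iff.1
    (tendstoUniformlyOn_shiftError_two_pow_mul m isBounded_closedBall) ε hε).exists
  have hshift (z : ℂ) : S (z + (2 ^ k * m : ℤ)) - c m = S z + shiftError z (2 ^ k * m) := by
    rw [S_add_intCast, c_two_pow_mul]
    ring
  obtain ⟨z, hz, hSz⟩ := hhurwitz (fun z => S (z + (2 ^ k * m : ℤ)) - c m)
    ((differentiableOn_S.comp (differentiableOn_id.add_const _)
      fun z hz => add_intCast_mem_UHP (hball hz) _).sub_const _)
    fun z hz => by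
      simpa only [hshift, add_sub_cancel_left, Pi.zero_apply, dist_zero_left] using hk z hz
  exact ⟨z + (2 ^ k * m : ℤ), add_intCast_mem_UHP (hball (ball_subset_closedBall hz)) _,
    eq_add_of_sub_eq hSz⟩
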